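/- Let Δ ⊆ ℝ^n be a Newton polyhedron with a loose edge E having endpoints a = (a_1,…,a_n) and b = (b_1,…,b_n). If min(a_i, b_i) = 0 for every i = 1,…,n, then a and b are the only vertices of Δ. -/

import Mathlib

open scoped Pointwise

noncomputable section

/-- Standard scalar product on `Fin n → ℝ`. -/
def dotR {n : ℕ} (ξ a : Fin n → ℝ) : ℝ := ∑ i, ξ i * a i

/-- The nonnegative orthant in `Fin n → ℝ`. -/
def posOrthant (n : ℕ) : Set (Fin n → ℝ) := {x | ∀ i, 0 ≤ x i}

/-- A Newton polyhedron: the convex hull of `S + ℝ_{≥0}^n` for a nonempty `S ⊆ ℕ^n`. -/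
def IsNewtonPolyhedron {n : ℕ} (Δ : Set (Fin n → ℝ)) : Prop :=
  ∃ S : Set (Fin n → ℕ), S.Nonempty ∧
    Δ = convexHull ℝ (((fun α : Fin n → ℕ => fun i => (α i : ℝ)) '' S) + posOrthant n)

/-- The face of `Δ` in direction `ξ`: the points of `Δ` minimizing `⟨ξ, ·⟩`. -/
def faceOf {n : ℕ} (Δ : Set (Fin n → ℝ)) (ξ : Fin n → ℝ) : Set (Fin n → ℝ) :=
  {a ∈ Δ | ∀ b ∈ Δ, dotR ξ a ≤ dotR ξ b}

/-- `F` is a face of `Δ` (cut out by some `ξ` with nonnegative entries). -/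
def IsFaceOf {n : ℕ} (Δ F : Set (Fin n → ℝ)) : Prop :=
  ∃ ξ : Fin n → ℝ, (∀ i, 0 ≤ ξ i) ∧ F = faceOf Δ ξ

/-- The dimension of a face: the rank of its direction space. -/
def faceDim {n : ℕ} (F : Set (Fin n → ℝ)) : ℕ := Module.finrank ℝ (vectorSpan ℝ F)

/-- A loose edge: a compact edge not contained in any compact face of dimension ≥ 2. -/
def IsLooseEdge {n : ℕ} (Δ E : Set (Fin n → ℝ)) : Prop :=
  IsFaceOf Δ E ∧ IsCompact E ∧ faceDim E = 1 ∧
    ∀ F : Set (Fin n → ℝ), IsFaceOf Δ F → IsCompact F → E ⊆ F → faceDim F ≤ 1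

/-- `v` is a vertex of `Δ` : the singleton `{v}` is a face. -/
def IsVertexOf {n : ℕ} (Δ : Set (Fin n → ℝ)) (v : Fin n → ℝ) : Prop :=
  IsFaceOf Δ {v}

/-!
Let `v ∉ {a, b}` be a vertex, the unique minimiser on `Δ` of some `η ≥ 0`, and say
`⟨η, a⟩ ≤ ⟨η, b⟩`. Then `v i < a i` for some `i`, so `b i = 0`, and adding a multiple of the
`i`-th coordinate to `η` gives `ζ ≥ 0` constant on the edge with `⟨ζ, v⟩ < ⟨ζ, a⟩`. The normal `ξ`
of the edge is positive because the edge is bounded; tilt it towards `ζ`, to `ξ + r • ζ` with the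
least `r ≥ 0` at which a lattice point `x₀` with `⟨ζ, x₀⟩ < ⟨ζ, a⟩` enters the face. That face has a
positive normal, so it is the convex hull of finitely many lattice points and compact; it contains
the edge and `x₀`, which is off the line of the edge, so its dimension is at least 2, contradicting
looseness.
-/

variable {n : ℕ}

lemma dotR_eq_dotProduct (ξ x : Fin n → ℝ) : dotR ξ x = ξ ⬝ᵥ x := rfl

lemma dotR_add_right (ξ x y : Fin n → ℝ) : dotR ξ (x + y) = dotR ξ x + dotR ξ y :=
  dotProduct_add ξ x y

lemma dotR_smul_right (ξ : Fin n → ℝ) (c : ℝ) (x : Fin n → ℝ) : dotR ξ (c • x) = c * dotR ξ x :=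
  dotProduct_smul c ξ x

lemma dotR_add_smul_left (ξ ζ : Fin n → ℝ) (r : ℝ) (x : Fin n → ℝ) :
    dotR (ξ + r • ζ) x = dotR ξ x + r * dotR ζ x := by
  rw [dotR_eq_dotProduct, add_dotProduct, smul_dotProduct, smul_eq_mul]; rfl

lemma dotR_single_left (i : Fin n) (c : ℝ) (x : Fin n → ℝ) : dotR (Pi.single i c) x = c * x i :=
  single_dotProduct x c i

lemma dotR_single_right (ξ : Fin n → ℝ) (i : Fin n) (c : ℝ) : dotR ξ (Pi.single i c) = ξ i * c :=
  dotProduct_single ξ c i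

lemma isLinearMap_dotR (ξ : Fin n → ℝ) : IsLinearMap ℝ (dotR ξ) :=
  ⟨dotR_add_right ξ, dotR_smul_right ξ⟩

lemma dotR_nonneg {ξ x : Fin n → ℝ} (hξ : 0 ≤ ξ) (hx : 0 ≤ x) : 0 ≤ dotR ξ x :=
  dotProduct_nonneg_of_nonneg hξ hx

lemma mul_le_dotR {ξ x : Fin n → ℝ} (hξ : 0 ≤ ξ) (hx : 0 ≤ x) (i : Fin n) :
    ξ i * x i ≤ dotR ξ x :=
  Finset.single_le_sum (fun j _ => mul_nonneg (hξ j) (hx j)) (Finset.mem_univ i)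

lemma eq_zero_of_dotR_nonpos {ξ x : Fin n → ℝ} (hξ : ∀ i, 0 < ξ i) (hx : 0 ≤ x)
    (h : dotR ξ x ≤ 0) : x = 0 := by
  have hterms := (Finset.sum_eq_zero_iff_of_nonneg fun i _ => mul_nonneg (hξ i).le (hx i)).1
    (h.antisymm (dotR_nonneg (fun i => (hξ i).le) hx))
  funext i
  exact (mul_eq_zero.1 (hterms i (Finset.mem_univ i))).resolve_left (hξ i).ne'

lemma le_dotR_of_mem_convexHull {U : Set (Fin n → ℝ)} {ξ y : Fin n → ℝ} {m : ℝ}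
    (hU : ∀ u ∈ U, m ≤ dotR ξ u) (hy : y ∈ convexHull ℝ U) : m ≤ dotR ξ y :=
  convexHull_min hU (convex_halfSpace_ge (isLinearMap_dotR ξ) m) hy

lemma convex_faceOf {Δ : Set (Fin n → ℝ)} (hΔ : Convex ℝ Δ) (ξ : Fin n → ℝ) :
    Convex ℝ (faceOf Δ ξ) := fun _ hx _ hy _ _ hs ht hst =>
  ⟨hΔ hx.1 hy.1 hs ht hst, fun z hz =>
    convex_halfSpace_le (isLinearMap_dotR ξ) _ (hx.2 z hz) (hy.2 z hz) hs ht hst⟩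

lemma dotR_lt_of_faceOf_eq_singleton {Δ : Set (Fin n → ℝ)} {η v x : Fin n → ℝ}
    (hv : {v} = faceOf Δ η) (hx : x ∈ Δ) (hxv : x ≠ v) : dotR η v < dotR η x := by
  have hvη : v ∈ faceOf Δ η := hv ▸ rfl
  refine (hvη.2 x hx).lt_of_ne fun h => hxv ?_
  have hxη : x ∈ faceOf Δ η := ⟨hx, fun y hy => h ▸ hvη.2 y hy⟩
  rwa [← hv] at hxη

/-- For `⊆`: the points strictly above the level of a minimiser, together with
`convexHull (faceOf U ξ)`, form a convex set containing `U`. -/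
lemma faceOf_convexHull (U : Set (Fin n → ℝ)) (ξ : Fin n → ℝ) :
    faceOf (convexHull ℝ U) ξ = convexHull ℝ (faceOf U ξ) := by
  refine subset_antisymm ?_ (convexHull_min (fun u hu => ⟨subset_convexHull ℝ U hu.1,
    fun y hy => le_dotR_of_mem_convexHull hu.2 hy⟩) (convex_faceOf (convex_convexHull ℝ U) ξ))
  rintro x ⟨hx, hxmin⟩
  have hU : ∀ u ∈ U, dotR ξ x ≤ dotR ξ u := fun u hu => hxmin u (subset_convexHull ℝ U hu)
  set K := {y | dotR ξ x < dotR ξ y} ∪ convexHull ℝ (faceOf U ξ)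
  have hK : ∀ y ∈ K, dotR ξ x ≤ dotR ξ y := by
    rintro y (hy | hy)
    exacts [hy.le, le_dotR_of_mem_convexHull hU (convexHull_mono (Set.sep_subset _ _) hy)]
  have h_above : ∀ y z, dotR ξ x < dotR ξ y → dotR ξ x ≤ dotR ξ z →
      openSegment ℝ y z ⊆ {w | dotR ξ x < dotR ξ w} := by
    rintro y z hy hz _ ⟨s, t, hs, ht, hst, rfl⟩
    have hsy := mul_lt_mul_of_pos_left hy hs
    have htz := mul_le_mul_of_nonneg_left hz ht.le
    have hsplit : s * dotR ξ x + t * dotR ξ x = dotR ξ x := by rw [← add_mul, hst, one_mul]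
    change dotR ξ x < dotR ξ (s • y + t • z)
    rw [dotR_add_right, dotR_smul_right, dotR_smul_right]
    linarith
  have hKconv : Convex ℝ K := by
    refine convex_iff_openSegment_subset.2 fun y hy z hz => ?_
    rcases hy with hy | hy
    · exact (h_above y z hy (hK z hz)).trans Set.subset_union_left
    rcases hz with hz | hz
    · rw [openSegment_symm]
      exact (h_above z y hz (hK y (Or.inr hy))).trans Set.subset_union_left
    · exact ((convex_convexHull ℝ _).openSegment_subset hy hz).trans Set.subset_union_right
  have hUK : U ⊆ K := fun u hu => (hU u hu).lt_or_eq.imp id fun (h : dotR ξ x = dotR ξ u) =>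
    subset_convexHull ℝ _ ⟨hu, fun w hw => h ▸ hU w hw⟩
  exact (convexHull_min hUK hKconv hx).resolve_left (lt_irrefl (dotR ξ x))

lemma pos_of_isCompact_faceOf {Δ : Set (Fin n → ℝ)}
    (hΔ : ∀ x ∈ Δ, ∀ c ∈ posOrthant n, x + c ∈ Δ) {ξ : Fin n → ℝ} (hξ : 0 ≤ ξ)
    (hF : IsCompact (faceOf Δ ξ)) (hne : (faceOf Δ ξ).Nonempty) (i : Fin n) : 0 < ξ i := by
  refine (hξ i).lt_of_ne fun hξi => ?_
  obtain ⟨x, hx⟩ := hne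
  obtain ⟨M, hM⟩ := hF.bddAbove_image (continuous_apply i).continuousOn
  set c : Fin n → ℝ := Pi.single i (max 0 (M - x i) + 1)
  have hc : c ∈ posOrthant n := (Pi.single_nonneg.2 (by positivity) : (0 : Fin n → ℝ) ≤ c)
  have hxc : x + c ∈ faceOf Δ ξ := by
    refine ⟨hΔ x hx.1 c hc, fun y hy => ?_⟩
    rw [dotR_add_right, dotR_single_right, ← hξi, Pi.zero_apply, zero_mul, add_zero]
    exact hx.2 y hy
  have := hM ⟨x + c, hxc, rfl⟩
  simp only [c, Pi.add_apply, Pi.single_eq_same] at this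
  linarith [le_max_right 0 (M - x i)]

lemma two_le_finrank_vectorSpan {k V : Type*} [Field k] [AddCommGroup V] [Module k V]
    [FiniteDimensional k V] (f : V →ₗ[k] k) {s : Set V} {a b x : V}
    (ha : a ∈ s) (hb : b ∈ s) (hx : x ∈ s) (hab : a ≠ b) (hfab : f a = f b) (hfx : f x ≠ f a) :
    2 ≤ Module.finrank k (vectorSpan k s) := by
  have hli : LinearIndependent k ![b - a, x - a] := by
    refine LinearIndependent.pair_iff.2 fun p q hpq => ?_
    have hq : q = 0 := by
      have := congrArg f hpq
      simp only [map_add, map_smul, map_sub, hfab, sub_self, smul_eq_mul, mul_zero, zero_add,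
        map_zero, mul_eq_zero, sub_eq_zero] at this
      exact this.resolve_right (hfab ▸ hfx)
    subst hq
    simpa [sub_eq_zero, hab.symm] using hpq
  have hspan : Submodule.span k (Set.range ![b - a, x - a]) ≤ vectorSpan k s := by
    rw [Submodule.span_le, Matrix.range_cons, Matrix.range_cons, Matrix.range_empty,
      Set.union_empty, Set.singleton_union, Set.insert_subset_iff, Set.singleton_subset_iff]
    exact ⟨vsub_mem_vectorSpan k hb ha, vsub_mem_vectorSpan k hx ha⟩
  calc 2 = Module.finrank k (Submodule.span k (Set.range ![b - a, x - a])) := by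
        rw [finrank_span_eq_card hli, Fintype.card_fin]
    _ ≤ _ := Submodule.finrank_mono hspan

lemma exists_nonneg_dotR_eq_dotR_lt {a b v η : Fin n → ℝ} (hv : 0 ≤ v)
    (hab : ∀ i, a i = 0 ∨ b i = 0) (hη : 0 ≤ η)
    (hva : dotR η v < dotR η a) (hvb : dotR η v < dotR η b) :
    ∃ ζ, 0 ≤ ζ ∧ dotR ζ a = dotR ζ b ∧ dotR ζ v < dotR ζ a := by
  wlog hle : dotR η a ≤ dotR η b generalizing a b
  · obtain ⟨ζ, hζ, hba, hζv⟩ := this (fun i => (hab i).symm) hvb hva (le_of_not_ge hle)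
    exact ⟨ζ, hζ, hba.symm, hba ▸ hζv⟩
  obtain ⟨i, hi⟩ : ∃ i, v i < a i := by
    by_contra! h
    exact (dotProduct_le_dotProduct_of_nonneg_left h hη).not_gt hva
  have hai : 0 < a i := (hv i).trans_lt hi
  have hbi : b i = 0 := (hab i).resolve_left hai.ne'
  set c := (dotR η b - dotR η a) / a i
  have hc : 0 ≤ c := div_nonneg (sub_nonneg.2 hle) hai.le
  have hca : c * a i = dotR η b - dotR η a := div_mul_cancel₀ _ hai.ne'
  refine ⟨η + c • Pi.single i 1, add_nonneg hη (smul_nonneg hc (Pi.single_nonneg.2 zero_le_one)),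
    ?_, ?_⟩ <;> simp only [dotR_add_smul_left, dotR_single_left, one_mul, hbi]
  · linarith
  · nlinarith

section Newton

variable {T : Set (Fin n → ℝ)}

def HasFiniteSublevels (T : Set (Fin n → ℝ)) : Prop :=
  ∀ ζ : Fin n → ℝ, (∀ i, 0 < ζ i) → ∀ M : ℝ, {x ∈ T | dotR ζ x ≤ M}.Finite

lemma hasFiniteSublevels_natCast_image (S : Set (Fin n → ℕ)) :
    HasFiniteSublevels ((fun α : Fin n → ℕ => fun i => (α i : ℝ)) '' S) := by
  intro ζ hζ M
  refine ((Set.finite_Iic fun i => ⌊M / ζ i⌋₊).image fun α i => (α i : ℝ)).subset ?_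
  rintro _ ⟨⟨α, -, rfl⟩, hM⟩
  refine ⟨α, fun i => Nat.le_floor ?_, rfl⟩
  rw [le_div_iff₀ (hζ i), mul_comm]
  exact (mul_le_dotR (fun j => (hζ j).le) (fun j => Nat.cast_nonneg _) i).trans hM

lemma subset_convexHull_add_posOrthant : T ⊆ convexHull ℝ (T + posOrthant n) :=
  fun x hx => subset_convexHull ℝ _ ⟨x, hx, 0, fun _ => le_rfl, add_zero x⟩

lemma convexHull_add_posOrthant_subset (hT : T ⊆ posOrthant n) :
    convexHull ℝ (T + posOrthant n) ⊆ posOrthant n := by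
  refine convexHull_min ?_ (convex_Ici (0 : Fin n → ℝ))
  rintro _ ⟨x, hx, c, hc, rfl⟩
  exact fun i => add_nonneg (hT hx i) (hc i)

lemma add_mem_convexHull_add_posOrthant {x c : Fin n → ℝ}
    (hx : x ∈ convexHull ℝ (T + posOrthant n)) (hc : c ∈ posOrthant n) :
    x + c ∈ convexHull ℝ (T + posOrthant n) := by
  have hC : posOrthant n + posOrthant n ⊆ posOrthant n := by
    rintro _ ⟨x, hx, y, hy, rfl⟩ i
    exact add_nonneg (hx i) (hy i)
  have := Set.add_mem_add hx (subset_convexHull ℝ _ hc)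
  rw [← convexHull_add, add_assoc] at this
  exact convexHull_mono (Set.add_subset_add_left hC) this

lemma mem_faceOf_convexHull_add_posOrthant {μ a : Fin n → ℝ} (hμ : 0 ≤ μ)
    (ha : a ∈ convexHull ℝ (T + posOrthant n)) (h : ∀ x ∈ T, dotR μ a ≤ dotR μ x) :
    a ∈ faceOf (convexHull ℝ (T + posOrthant n)) μ := by
  refine ⟨ha, fun y => le_dotR_of_mem_convexHull ?_⟩
  rintro _ ⟨x, hx, c, hc, rfl⟩
  rw [dotR_add_right]
  exact le_add_of_le_of_nonneg (h x hx) (dotR_nonneg hμ hc)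

lemma faceOf_add_posOrthant_subset {μ : Fin n → ℝ} (hμ : ∀ i, 0 < μ i) :
    faceOf (T + posOrthant n) μ ⊆ T := by
  rintro _ ⟨⟨x, hx, c, hc, rfl⟩, hmin⟩
  have := hmin x ⟨x, hx, 0, fun _ => le_rfl, add_zero x⟩
  rw [dotR_add_right] at this
  show x + c ∈ T
  rwa [eq_zero_of_dotR_nonpos hμ hc (by linarith), add_zero]

lemma isCompact_faceOf_convexHull_add_posOrthant (hT : HasFiniteSublevels T) {μ : Fin n → ℝ}
    (hμ : ∀ i, 0 < μ i) : IsCompact (faceOf (convexHull ℝ (T + posOrthant n)) μ) := by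
  rw [faceOf_convexHull]
  apply Set.Finite.isCompact_convexHull
  rcases (faceOf (T + posOrthant n) μ).eq_empty_or_nonempty with h | ⟨x₀, hx₀⟩
  · simp [h]
  · exact (hT μ hμ (dotR μ x₀)).subset fun x hx =>
      ⟨faceOf_add_posOrthant_subset hμ hx, hx.2 x₀ hx₀.1⟩

/-- `r` is the least ratio `ρ x` below; it is attained because `{x ∈ C | ρ x ≤ ρ x₁}` is a
sublevel set of the positive functional `ξ + ρ x₁ • ζ`. -/
lemma exists_tilted_faceOf_mem (hT : HasFiniteSublevels T) {ξ ζ a v : Fin n → ℝ}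
    (hξ : ∀ i, 0 < ξ i) (hζ : 0 ≤ ζ) (ha : a ∈ faceOf (convexHull ℝ (T + posOrthant n)) ξ)
    (hv : v ∈ convexHull ℝ (T + posOrthant n)) (hva : dotR ζ v < dotR ζ a) :
    ∃ r : ℝ, 0 ≤ r ∧ ∃ x₀ ∈ T, dotR ζ x₀ < dotR ζ a ∧
      a ∈ faceOf (convexHull ℝ (T + posOrthant n)) (ξ + r • ζ) ∧
      x₀ ∈ faceOf (convexHull ℝ (T + posOrthant n)) (ξ + r • ζ) := by
  set C := {x ∈ T | dotR ζ x < dotR ζ a}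
  set ρ : (Fin n → ℝ) → ℝ := fun x => (dotR ξ x - dotR ξ a) / (dotR ζ a - dotR ζ x)
  have hξa : ∀ x ∈ T, dotR ξ a ≤ dotR ξ x := fun x hx =>
    ha.2 x (subset_convexHull_add_posOrthant hx)
  have hρ_le : ∀ x ∈ C, ∀ s, ρ x ≤ s ↔ dotR (ξ + s • ζ) x ≤ dotR (ξ + s • ζ) a := fun x hx s => by
    rw [div_le_iff₀ (sub_pos.2 hx.2), dotR_add_smul_left, dotR_add_smul_left]
    constructor <;> intro <;> linarith
  have hle_ρ : ∀ x ∈ C, ∀ s, s ≤ ρ x ↔ dotR (ξ + s • ζ) a ≤ dotR (ξ + s • ζ) x := fun x hx s => by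
    rw [le_div_iff₀ (sub_pos.2 hx.2), dotR_add_smul_left, dotR_add_smul_left]
    constructor <;> intro <;> linarith
  have hρ_nonneg : ∀ x ∈ C, 0 ≤ ρ x := fun x hx =>
    div_nonneg (sub_nonneg.2 (hξa x hx.1)) (sub_nonneg.2 hx.2.le)
  have hpos : ∀ s : ℝ, 0 ≤ s → ∀ i, 0 < (ξ + s • ζ) i := fun s hs i =>
    add_pos_of_pos_of_nonneg (hξ i) (smul_nonneg hs hζ i)
  obtain ⟨x₁, hx₁⟩ : C.Nonempty := by
    by_contra! h
    refine hva.not_ge ((mem_faceOf_convexHull_add_posOrthant hζ ha.1 fun x hx => ?_).2 v hv)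
    exact not_lt.1 fun hlt => h.subset ⟨hx, hlt⟩
  have hfin : {x ∈ C | ρ x ≤ ρ x₁}.Finite :=
    (hT (ξ + ρ x₁ • ζ) (hpos (ρ x₁) (hρ_nonneg x₁ hx₁)) (dotR (ξ + ρ x₁ • ζ) a)).subset
      fun x hx => ⟨hx.1.1, (hρ_le x hx.1 _).1 hx.2⟩
  obtain ⟨x₀, ⟨hx₀, -⟩, hmin⟩ := Set.exists_min_image _ ρ hfin ⟨x₁, hx₁, le_rfl⟩
  have hρ_min : ∀ x ∈ C, ρ x₀ ≤ ρ x := fun x hx =>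
    (le_total (ρ x) (ρ x₁)).elim (fun h => hmin x ⟨hx, h⟩) fun h => (hmin x₁ ⟨hx₁, le_rfl⟩).trans h
  have hr : 0 ≤ ρ x₀ := hρ_nonneg x₀ hx₀
  have haF : a ∈ faceOf (convexHull ℝ (T + posOrthant n)) (ξ + ρ x₀ • ζ) := by
    refine mem_faceOf_convexHull_add_posOrthant (fun i => (hpos _ hr i).le) ha.1 fun x hx => ?_
    by_cases hxC : dotR ζ x < dotR ζ a
    · exact (hle_ρ x ⟨hx, hxC⟩ _).1 (hρ_min x ⟨hx, hxC⟩)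
    · rw [dotR_add_smul_left, dotR_add_smul_left]
      exact add_le_add (hξa x hx) (mul_le_mul_of_nonneg_left (not_lt.1 hxC) hr)
  refine ⟨ρ x₀, hr, x₀, hx₀.1, hx₀.2, haF, subset_convexHull_add_posOrthant hx₀.1, fun y hy => ?_⟩
  exact ((hρ_le x₀ hx₀ _).1 le_rfl).trans (haF.2 y hy)

end Newton

/-- Lemma 2: if a loose edge has endpoints `a`, `b` with `min (a i) (b i) = 0` for all `i`,
then `a` and `b` are the only vertices of `Δ`. -/
theorem looseEdge_two_vertices {n : ℕ} (Δ E : Set (Fin n → ℝ)) (a b : Fin n → ℝ)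
    (hΔ : IsNewtonPolyhedron Δ) (hE : IsLooseEdge Δ E)
    (hab : a ≠ b) (hseg : E = segment ℝ a b)
    (hmin : ∀ i, min (a i) (b i) = 0) :
    ∀ v : Fin n → ℝ, IsVertexOf Δ v → v = a ∨ v = b := by
  rintro v ⟨η, hη, hvη⟩
  by_contra! hv
  obtain ⟨S, -, rfl⟩ := hΔ
  obtain ⟨⟨ξ, hξ, rfl⟩, hEc, -, hloose⟩ := hE
  have hT := hasFiniteSublevels_natCast_image S
  have ha : a ∈ faceOf _ ξ := hseg ▸ left_mem_segment ℝ a b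
  have hb : b ∈ faceOf _ ξ := hseg ▸ right_mem_segment ℝ a b
  have hξ_pos := pos_of_isCompact_faceOf (fun _ hx _ hc => add_mem_convexHull_add_posOrthant hx hc)
    hξ hEc ⟨a, ha⟩
  have hvΔ : v ∈ convexHull ℝ _ := (hvη ▸ Set.mem_singleton v : v ∈ faceOf _ η).1
  have hv_nonneg : 0 ≤ v :=
    convexHull_add_posOrthant_subset (by rintro _ ⟨α, -, rfl⟩ i; positivity) hvΔ
  have hab0 (i : Fin n) : a i = 0 ∨ b i = 0 :=
    (min_choice (a i) (b i)).imp (fun h => h.symm.trans (hmin i)) fun h => h.symm.trans (hmin i)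
  obtain ⟨ζ, hζ, hζab, hζv⟩ := exists_nonneg_dotR_eq_dotR_lt hv_nonneg hab0 hη
    (dotR_lt_of_faceOf_eq_singleton hvη ha.1 hv.1.symm)
    (dotR_lt_of_faceOf_eq_singleton hvη hb.1 hv.2.symm)
  obtain ⟨r, hr, x₀, -, hx₀ζ, haF, hx₀F⟩ := exists_tilted_faceOf_mem hT hξ_pos hζ ha hvΔ hζv
  have hμ (i : Fin n) : 0 < (ξ + r • ζ) i :=
    add_pos_of_pos_of_nonneg (hξ_pos i) (smul_nonneg hr hζ i)
  have hbF : b ∈ faceOf _ (ξ + r • ζ) := ⟨hb.1, by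
    rw [dotR_add_smul_left, ← hζab, ← (ha.2 b hb.1).antisymm (hb.2 a ha.1), ← dotR_add_smul_left]
    exact haF.2⟩
  have hEF := (convex_faceOf (convex_convexHull ℝ _) _).segment_subset haF hbF
  have hdim_le := hloose _ ⟨_, fun i => (hμ i).le, rfl⟩
    (isCompact_faceOf_convexHull_add_posOrthant hT hμ) (hseg ▸ hEF)
  have hdim_ge := two_le_finrank_vectorSpan (isLinearMap_dotR ζ).mk' haF hbF hx₀F hab hζab hx₀ζ.ne
  exact absurd hdim_le (not_le.2 hdim_ge)
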